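/- Backward search formula for local orderings: let s be a primitive string of length n over Σ whose rotation matrix is sorted by a local ordering of context length 1. Let x = x₁x₂⋯x_m with 2 ≤ m ≤ n, and suppose the strings x₁x₂ and x₂⋯x_m both occur as prefixes of rotations of s. Writing Rng(w) = [b_w, ℓ_w] to mean that the rows prefixed by w are exactly those t with b_w ≤ t < b_w + ℓ_w, let b̄ = b_{x₁x₂}, b = b_{x₂}, b' = b_{x₂⋯x_m}, ℓ' = ℓ_{x₂⋯x_m}, and set r = #{t : b ≤ t < b', L[t] = x₁} and h = #{t : b' ≤ t < b' + ℓ', L[t] = x₁}. Then the rows prefixed by x₁x₂⋯x_m are exactly those t with b̄ + r ≤ t < b̄ + r + h, i.e., Rng(x₁⋯x_m) = [b̄ + r, h]. -/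
import Mathlib


open scoped Classical

variable {A : Type*}

/-- Longest common prefix of two lists. -/
def lcp [DecidableEq A] : List A → List A → List A
  | a :: as, b :: bs => if a = b then a :: lcp as bs else []
  | _, _ => []

/-- A string is primitive if its cyclic rotations are pairwise distinct. -/
def Primitive (s : List A) : Prop :=
  ∀ i j, i < s.length → j < s.length → s.rotate i = s.rotate j → i = j

/-- The context-adaptive comparison relation on rotations. -/
def Prec [DecidableEq A] (π : List A → A → A → Prop) (u v : List A) : Prop :=
  ∃ a b, u[(lcp u v).length]? = some a ∧ v[(lcp u v).length]? = some b ∧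
    π (lcp u v) a b

/-- `rank π s i` is the row index of the rotation `s.rotate i` in the sorted
rotation matrix `M_*(s)`. -/
noncomputable def rank [DecidableEq A] (π : List A → A → A → Prop)
    (s : List A) (i : ℕ) : ℕ :=
  ((Finset.range s.length).filter
    (fun j => Prec π (s.rotate j) (s.rotate i))).card

/-- Row `t` of the sorted rotation matrix is prefixed by `w`. -/
def RowPref [DecidableEq A] (π : List A → A → A → Prop)
    (s w : List A) (t : ℕ) : Prop :=
  ∃ i < s.length, rank π s i = t ∧ w <+: s.rotate i

/-- The symbol `L[t]` of `L = BWT_*(s)` is `c`, i.e. the rotation of rank `t`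
ends with `c`. -/
def Lsym [DecidableEq A] (π : List A → A → A → Prop)
    (s : List A) (t : ℕ) (c : A) : Prop :=
  ∃ i < s.length, rank π s i = t ∧ (s.rotate i).getLast? = some c

section L
variable [DecidableEq A]

theorem lcp_nil_left (v : List A) : lcp [] v = [] := by cases v <;> rfl

theorem lcp_comm (u v : List A) : lcp u v = lcp v u := by
  induction u generalizing v with
  | nil => cases v <;> rfl
  | cons a u ih =>
    cases v with
    | nil => rfl
    | cons b v =>
      by_cases h : a = b
      · subst h; simp [lcp, ih]
      · simp [lcp, h, Ne.symm h]

theorem lcp_prefix_left (u v : List A) : lcp u v <+: u := by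
  induction u generalizing v with
  | nil => cases v <;> simp [lcp]
  | cons a u ih =>
    cases v with
    | nil => simp [lcp]
    | cons b v =>
      by_cases h : a = b
      · simp only [lcp, if_pos h]
        exact (List.cons_prefix_cons).2 ⟨rfl, ih v⟩
      · simp [lcp, h]

theorem lcp_prefix_right (u v : List A) : lcp u v <+: v := by
  rw [lcp_comm]; exact lcp_prefix_left v u

theorem lcp_self (u : List A) : lcp u u = u := by
  induction u with
  | nil => rfl
  | cons a u ih => simp [lcp, ih]

theorem lcp_cons (a : A) (u v : List A) : lcp (a::u) (a::v) = a :: lcp u v := by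
  simp [lcp]

theorem lcp_getElem_ne {u v : List A} {a b : A}
    (ha : u[(lcp u v).length]? = some a) (hb : v[(lcp u v).length]? = some b) :
    a ≠ b := by
  induction u generalizing v with
  | nil => simp at ha
  | cons c u ih =>
    cases v with
    | nil => simp at hb
    | cons d v =>
      by_cases h : c = d
      · subst h
        simp only [lcp_cons, List.length_cons, List.getElem?_cons_succ] at ha hb
        exact ih ha hb
      · simp only [lcp, if_neg h, List.length_nil, List.getElem?_cons_zero] at ha hb
        rw [← Option.some_inj.1 ha, ← Option.some_inj.1 hb]; exact h

theorem lcp_spec {u v : List A} {m : ℕ} {a b : A}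
    (hagree : ∀ k < m, u[k]? = v[k]?) (ha : u[m]? = some a) (hb : v[m]? = some b)
    (hab : a ≠ b) : lcp u v = u.take m := by
  induction m generalizing u v with
  | zero =>
    cases u with
    | nil => simp at ha
    | cons c u =>
      cases v with
      | nil => simp at hb
      | cons d v =>
        simp only [List.getElem?_cons_zero, Option.some_inj] at ha hb
        have : c ≠ d := by rw [← ha, ← hb] at hab; exact hab
        simp [lcp, this]
  | succ m ih =>
    cases u with
    | nil => simp at ha
    | cons c u =>
      cases v with
      | nil => simp at hb
      | cons d v =>
        have h0 : c = d := by
          have := hagree 0 (Nat.succ_pos m)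
          simpa using this
        subst h0
        have : lcp u v = u.take m := by
          refine ih (fun k hk => ?_) (by simpa using ha) (by simpa using hb)
          have := hagree (k+1) (by omega)
          simpa using this
        simp [lcp_cons, this, List.take_succ_cons]

theorem lcp_eq_take (u v : List A) : lcp u v = u.take (lcp u v).length :=
  List.prefix_iff_eq_take.1 (lcp_prefix_left u v)

theorem lcp_eq_take' (u v : List A) : lcp u v = v.take (lcp u v).length := by
  rw [lcp_comm]; exact lcp_eq_take v u

theorem lcp_getElem_eq {u v : List A} {k : ℕ} (hk : k < (lcp u v).length) :
    u[k]? = v[k]? := by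
  have h1 : (lcp u v)[k]? = u[k]? := by
    conv_lhs => rw [lcp_eq_take u v]
    rw [List.getElem?_take]; simp [hk]
  have h2 : (lcp u v)[k]? = v[k]? := by
    conv_lhs => rw [lcp_comm, lcp_eq_take v u]
    rw [List.getElem?_take]; simp [lcp_comm u v ▸ hk]
  rw [← h1, h2]

theorem lcp_length_lt {u v : List A} (hne : u ≠ v) (hlen : u.length = v.length) :
    (lcp u v).length < u.length := by
  rcases lt_or_eq_of_le (lcp_prefix_left u v).length_le with h | h
  · exact h
  · have hu : lcp u v = u := (lcp_prefix_left u v).eq_of_length h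
    have huv : u <+: v := hu ▸ lcp_prefix_right u v
    exact absurd (huv.eq_of_length hlen) hne

theorem lcp_append {u v : List A} (hne : u ≠ v) (hlen : u.length = v.length)
    (x y : List A) : lcp (u ++ x) (v ++ y) = lcp u v := by
  induction u generalizing v with
  | nil =>
    cases v with
    | nil => exact absurd rfl hne
    | cons b v => simp at hlen
  | cons a u ih =>
    cases v with
    | nil => simp at hlen
    | cons b v =>
      by_cases h : a = b
      · subst h
        have : u ≠ v := fun h' => hne (by rw [h'])
        simp only [List.cons_append, lcp_cons, ih this (by simpa using hlen)]
      · simp [lcp, h]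

theorem take_eq_of_agree {u v : List A} {m : ℕ} (hag : ∀ k < m, u[k]? = v[k]?) :
    u.take m = v.take m := by
  apply List.ext_getElem?
  intro k
  rw [List.getElem?_take, List.getElem?_take]
  by_cases hk : k < m
  · simp [hk, hag k hk]
  · simp [hk]

variable {π : List A → A → A → Prop}

theorem Prec_irrefl (u : List A) : ¬ Prec π u u := by
  rintro ⟨a, b, ha, -, -⟩
  rw [lcp_self] at ha
  simp at ha

theorem Prec_total (hπ : ∀ x, IsStrictTotalOrder A (π x)) {u v : List A}
    (hne : u ≠ v) (hlen : u.length = v.length) : Prec π u v ∨ Prec π v u := by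
  have hl : (lcp u v).length < u.length := lcp_length_lt hne hlen
  have hl' : (lcp u v).length < v.length := hlen ▸ hl
  have ha : u[(lcp u v).length]? = some u[(lcp u v).length] := List.getElem?_eq_getElem hl
  have hb : v[(lcp u v).length]? = some v[(lcp u v).length] := List.getElem?_eq_getElem hl'
  have hab := lcp_getElem_ne ha hb
  haveI := hπ (lcp u v)
  rcases trichotomous_of (π (lcp u v)) u[(lcp u v).length] v[(lcp u v).length] with h | h | h
  · exact Or.inl ⟨_, _, ha, hb, h⟩
  · exact absurd h hab
  · exact Or.inr ⟨_, _, by rw [lcp_comm v u]; exact hb, by rw [lcp_comm v u]; exact ha,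
      by rw [lcp_comm v u]; exact h⟩

theorem Prec_asymm (hπ : ∀ x, IsStrictTotalOrder A (π x)) {u v : List A}
    (h1 : Prec π u v) (h2 : Prec π v u) : False := by
  obtain ⟨a, b, ha, hb, hab⟩ := h1
  obtain ⟨b', a', hb', ha', hba⟩ := h2
  rw [lcp_comm v u] at hb' ha' hba
  rw [ha] at ha'; rw [hb] at hb'
  obtain rfl : a = a' := by injection ha'
  obtain rfl : b = b' := by injection hb'
  haveI := hπ (lcp u v)
  exact absurd (trans_of (π (lcp u v)) hab hba) (irrefl_of (π (lcp u v)) a)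

theorem Prec_trans (hπ : ∀ x, IsStrictTotalOrder A (π x)) {u v w : List A}
    (h1 : Prec π u v) (h2 : Prec π v w) : Prec π u w := by
  obtain ⟨a, b, ha, hb, hab⟩ := h1
  obtain ⟨b', c, hb', hc, hbc⟩ := h2
  have hne_ab : a ≠ b := lcp_getElem_ne ha hb
  have hne_bc : b' ≠ c := lcp_getElem_ne hb' hc
  haveI := hπ (lcp u v)
  haveI := hπ (lcp v w)
  rcases lt_trichotomy (lcp u v).length (lcp v w).length with h | h | h
  · have hw : w[(lcp u v).length]? = some b := (lcp_getElem_eq h).symm.trans hb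
    have hluw : lcp u w = u.take (lcp u v).length := by
      refine lcp_spec (fun k hk => ?_) ha hw hne_ab
      exact (lcp_getElem_eq hk).trans (lcp_getElem_eq (hk.trans h))
    have hluv : lcp u w = lcp u v := by rw [hluw, ← lcp_eq_take]
    exact ⟨a, b, by rw [hluv]; exact ha, by rw [hluv]; exact hw, by rw [hluv]; exact hab⟩
  · have hvv : lcp u v = lcp v w := by
      rw [lcp_eq_take' u v, lcp_eq_take v w, h]
    obtain rfl : b = b' := by
      rw [h] at hb
      exact Option.some_inj.1 (hb.symm.trans hb')
    have hac : π (lcp u v) a c := trans_of (π (lcp u v)) hab (hvv ▸ hbc)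
    have hne_ac : a ≠ c := by
      rintro rfl
      exact absurd (trans_of (π (lcp u v)) hab (hvv ▸ hbc)) (irrefl_of (π (lcp u v)) a)
    have hc' : w[(lcp u v).length]? = some c := by rw [h]; exact hc
    have hluw : lcp u w = u.take (lcp u v).length := by
      refine lcp_spec (fun k hk => ?_) ha hc' hne_ac
      exact (lcp_getElem_eq hk).trans (lcp_getElem_eq (h ▸ hk))
    have hluv : lcp u w = lcp u v := by rw [hluw, ← lcp_eq_take]
    exact ⟨a, c, by rw [hluv]; exact ha, by rw [hluv]; exact hc', by rw [hluv]; exact hac⟩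
  · have hu : u[(lcp v w).length]? = some b' := (lcp_getElem_eq (u:=u) (v:=v) h).trans hb'
    have hluw : lcp u w = u.take (lcp v w).length := by
      refine lcp_spec (fun k hk => ?_) hu hc hne_bc
      exact (lcp_getElem_eq (hk.trans h)).trans (lcp_getElem_eq hk)
    have hlvw : lcp u w = lcp v w := by
      rw [hluw, take_eq_of_agree (fun k hk => lcp_getElem_eq (u := u) (v := v) (hk.trans h))]
      exact (lcp_eq_take v w).symm
    exact ⟨b', c, by rw [hlvw]; exact hu, by rw [hlvw]; exact hc, by rw [hlvw]; exact hbc⟩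

variable (hπ : ∀ x, IsStrictTotalOrder A (π x)) {s : List A} (hprim : Primitive s)

include hπ hprim

set_option linter.unusedSectionVars false

omit hπ hprim in
theorem getLast?_concat' (w : List A) (a : A) : (w ++ [a]).getLast? = some a := by
  simp [List.getLast?_append]

omit hπ hprim in
theorem exists_concat {l : List A} (h : l ≠ []) : ∃ q c, l = q ++ [c] := by
  rcases List.eq_nil_or_concat l with h' | ⟨q, c, h'⟩
  · exact absurd h' h
  · exact ⟨q, c, by simpa using h'⟩

theorem rot_ne {i j : ℕ} (hi : i < s.length) (hj : j < s.length) (hij : i ≠ j) :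
    s.rotate i ≠ s.rotate j := fun h => hij (hprim i j hi hj h)

theorem rank_lt {i : ℕ} (hi : i < s.length) : rank π s i < s.length := by
  have hsub : (Finset.range s.length).filter
      (fun j => Prec π (s.rotate j) (s.rotate i)) ⊆ (Finset.range s.length).erase i := by
    intro k hk
    rw [Finset.mem_filter] at hk
    refine Finset.mem_erase.2 ⟨?_, hk.1⟩
    rintro rfl
    exact Prec_irrefl _ hk.2
  calc rank π s i ≤ ((Finset.range s.length).erase i).card := Finset.card_le_card hsub
    _ < (Finset.range s.length).card := by
        refine Finset.card_erase_lt_of_mem (Finset.mem_range.2 hi)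
    _ = s.length := Finset.card_range _

theorem rank_lt_of_prec {i j : ℕ} (hi : i < s.length) (hj : j < s.length)
    (hij : Prec π (s.rotate i) (s.rotate j)) : rank π s i < rank π s j := by
    apply Finset.card_lt_card
    constructor
    · intro k hk
      rw [Finset.mem_filter] at hk ⊢
      exact ⟨hk.1, Prec_trans hπ hk.2 hij⟩
    · intro hsub
      have : i ∈ (Finset.range s.length).filter
          (fun k => Prec π (s.rotate k) (s.rotate j)) :=
        Finset.mem_filter.2 ⟨Finset.mem_range.2 hi, hij⟩
      have := Finset.mem_filter.1 (hsub this)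
      exact Prec_irrefl _ this.2

theorem prec_iff_rank_lt {i j : ℕ} (hi : i < s.length) (hj : j < s.length) :
    Prec π (s.rotate i) (s.rotate j) ↔ rank π s i < rank π s j := by
  constructor
  · exact rank_lt_of_prec hπ hprim hi hj
  · intro hlt
    by_cases hij : i = j
    · subst hij; omega
    · rcases Prec_total hπ (rot_ne hπ hprim hi hj hij) (by simp) with h | h
      · exact h
      · have := rank_lt_of_prec hπ hprim hj hi h
        omega

theorem rank_inj {i j : ℕ} (hi : i < s.length) (hj : j < s.length)
    (h : rank π s i = rank π s j) : i = j := by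
  by_contra hij
  rcases Prec_total hπ (rot_ne hπ hprim hi hj hij) (by simp) with hp | hp
  · have := (prec_iff_rank_lt hπ hprim hi hj).1 hp; omega
  · have := (prec_iff_rank_lt hπ hprim hj hi).1 hp; omega

theorem rank_surj {t : ℕ} (ht : t < s.length) : ∃ i < s.length, rank π s i = t := by
  have hinj : Set.InjOn (rank π s) (Finset.range s.length) := by
    intro i hi j hj hij
    exact rank_inj hπ hprim (Finset.mem_range.1 hi) (Finset.mem_range.1 hj) hij
  have hsub : (Finset.range s.length).image (rank π s) ⊆ Finset.range s.length := by
    intro u hu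
    obtain ⟨i, hi, rfl⟩ := Finset.mem_image.1 hu
    exact Finset.mem_range.2 (rank_lt hπ hprim (Finset.mem_range.1 hi))
  have hcard : ((Finset.range s.length).image (rank π s)).card =
      (Finset.range s.length).card := by
    rw [Finset.card_image_of_injOn hinj]
  have heq := Finset.eq_of_subset_of_card_le hsub (le_of_eq hcard.symm)
  have : t ∈ (Finset.range s.length).image (rank π s) := by
    rw [heq]; exact Finset.mem_range.2 ht
  obtain ⟨i, hi, hit⟩ := Finset.mem_image.1 this
  exact ⟨i, Finset.mem_range.1 hi, hit⟩

omit hπ hprim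

theorem lcp_ne_nil {a : A} {u v : List A} : lcp (a :: u) (a :: v) ≠ [] := by
  simp [lcp_cons]

variable (hloc : ∀ (x y : List A) (c : A), π (x ++ [c]) = π (y ++ [c]))
include hloc

theorem prec_cons_iff {u v : List A} (hne0 : lcp u v ≠ []) (a : A) :
    Prec π (a :: u) (a :: v) ↔ Prec π u v := by
  obtain ⟨q, c, hqc⟩ := exists_concat hne0
  have hctx : π (a :: lcp u v) = π (lcp u v) := by
    rw [hqc]
    simpa using hloc (a :: q) q c
  constructor <;> rintro ⟨x, y, hx, hy, hxy⟩
  · refine ⟨x, y, ?_, ?_, ?_⟩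
    · simpa [lcp_cons] using hx
    · simpa [lcp_cons] using hy
    · rw [← hctx]; simpa [lcp_cons] using hxy
  · refine ⟨x, y, ?_, ?_, ?_⟩
    · simpa [lcp_cons] using hx
    · simpa [lcp_cons] using hy
    · simpa [lcp_cons, hctx] using hxy

omit hloc

theorem prec_concat_iff {u v : List A} (hne : u ≠ v) (hlen : u.length = v.length)
    (c : A) : Prec π (u ++ [c]) (v ++ [c]) ↔ Prec π u v := by
  have hl := lcp_append hne hlen [c] [c]
  have hlt : (lcp u v).length < u.length := lcp_length_lt hne hlen
  have hu : (u ++ [c])[(lcp u v).length]? = u[(lcp u v).length]? := by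
    rw [List.getElem?_append]; simp [hlt]
  have hv : (v ++ [c])[(lcp u v).length]? = v[(lcp u v).length]? := by
    rw [List.getElem?_append]; simp [hlen ▸ hlt]
  constructor <;> rintro ⟨x, y, hx, hy, hxy⟩
  · exact ⟨x, y, by rw [← hu]; rw [hl] at hx; exact hx,
      by rw [← hv]; rw [hl] at hy; exact hy, by rw [hl] at hxy; exact hxy⟩
  · exact ⟨x, y, by rw [hl, hu]; exact hx, by rw [hl, hv]; exact hy,
      by rw [hl]; exact hxy⟩

theorem prefix_concat_iff {y w : List A} {a : A} (hy : y.length ≤ w.length) :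
    y <+: w ++ [a] ↔ y <+: w := by
  constructor
  · intro hp
    have := List.prefix_iff_eq_take.1 hp
    rw [List.take_append_of_le_length hy] at this
    exact this ▸ List.take_prefix _ _
  · exact fun hp => hp.trans (w.prefix_append [a])

theorem rot_decomp {s : List A} (hs : 1 ≤ s.length) {i : ℕ} (hi : i < s.length) :
    ∃ a w, s.rotate ((i + (s.length - 1)) % s.length) = a :: w ∧
      s.rotate i = w ++ [a] := by
  set j := (i + (s.length - 1)) % s.length with hj
  have hjne : s.rotate j ≠ [] := by
    apply List.ne_nil_of_length_pos
    rw [List.length_rotate]; omega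
  obtain ⟨a, w, haw⟩ := List.exists_cons_of_ne_nil hjne
  refine ⟨a, w, haw, ?_⟩
  have h1 : (s.rotate j).rotate 1 = s.rotate i := by
    rw [hj, List.rotate_mod, List.rotate_rotate]
    have : i + (s.length - 1) + 1 = s.length + i := by omega
    rw [this, ← List.rotate_rotate, List.rotate_length]
  rw [haw] at h1
  rw [← h1]
  simpa using List.rotate_cons_succ w a 0

end L

/-- backward search formula for local orderings of context
length 1. Here `x = x₁ :: x₂ :: z` (so `m = z.length + 2 ≤ n`),
`Rng(x₁x₂) = [bb, lb]`, `Rng(x₂) = [b, l]`, `Rng(x₂⋯x_m) = [b', l']` (both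
`x₁x₂` and `x₂⋯x_m` occur), `r` counts the occurrences of `x₁` in `L[b, b')`
and `h` those in `L[b', b'+l')`; then `Rng(x₁⋯x_m) = [bb + r, h]`. -/
theorem stmt10 [Fintype A] [DecidableEq A]
    (π : List A → A → A → Prop) (hπ : ∀ x, IsStrictTotalOrder A (π x))
    (hloc : ∀ (x y : List A) (c : A), π (x ++ [c]) = π (y ++ [c]))
    (s : List A) (hs : 1 ≤ s.length) (hprim : Primitive s)
    (x₁ x₂ : A) (z : List A) (hm : z.length + 2 ≤ s.length)
    (bb lb b l b' l' : ℕ)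
    (h12 : ∀ t, RowPref π s [x₁, x₂] t ↔ (bb ≤ t ∧ t < bb + lb))
    (h2 : ∀ t, RowPref π s [x₂] t ↔ (b ≤ t ∧ t < b + l))
    (h2m : ∀ t, RowPref π s (x₂ :: z) t ↔ (b' ≤ t ∧ t < b' + l'))
    (hocc12 : 1 ≤ lb) (hocc2m : 1 ≤ l')
    (r h : ℕ)
    (hr : r = ((Finset.Ico b b').filter (fun t => Lsym π s t x₁)).card)
    (hh : h = ((Finset.Ico b' (b' + l')).filter (fun t => Lsym π s t x₁)).card) :
    ∀ t, RowPref π s (x₁ :: x₂ :: z) t ↔ (bb + r ≤ t ∧ t < bb + r + h) := by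
  classical
  have hn2 : 2 ≤ s.length := by omega
  -- choose an inverse of rank
  have key : ∀ t : ℕ, ∃ i : ℕ, t < s.length → i < s.length ∧ rank π s i = t := by
    intro t
    by_cases ht : t < s.length
    · obtain ⟨i, hi, hrk⟩ := rank_surj hπ hprim ht
      exact ⟨i, fun _ => ⟨hi, hrk⟩⟩
    · exact ⟨0, fun hlt => absurd hlt ht⟩
  choose idx hidx using key
  have hidxlt : ∀ t < s.length, idx t < s.length := fun t ht => (hidx t ht).1
  have hidxrk : ∀ t < s.length, rank π s (idx t) = t := fun t ht => (hidx t ht).2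
  have hidx_eq : ∀ t < s.length, ∀ i < s.length, rank π s i = t → i = idx t := by
    intro t ht i hi hrk
    exact rank_inj hπ hprim hi (hidxlt t ht) (hrk.trans (hidxrk t ht).symm)
  have hRow : ∀ t < s.length, ∀ w, (RowPref π s w t ↔ w <+: s.rotate (idx t)) := by
    intro t ht w
    constructor
    · rintro ⟨i, hi, hrk, hp⟩
      rwa [hidx_eq t ht i hi hrk] at hp
    · intro hp
      exact ⟨idx t, hidxlt t ht, hidxrk t ht, hp⟩
  have hLs : ∀ t < s.length, ∀ c,
      (Lsym π s t c ↔ (s.rotate (idx t)).getLast? = some c) := by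
    intro t ht c
    constructor
    · rintro ⟨i, hi, hrk, hp⟩
      rwa [hidx_eq t ht i hi hrk] at hp
    · intro hp
      exact ⟨idx t, hidxlt t ht, hidxrk t ht, hp⟩
  have hLs_lt : ∀ t c, Lsym π s t c → t < s.length := by
    rintro t c ⟨i, hi, hrk, -⟩
    exact hrk ▸ rank_lt hπ hprim hi
  -- interval inclusions
  have hx2z : [x₂] <+: (x₂ :: z) := ⟨z, rfl⟩
  have hb'b : b ≤ b' ∧ b' < b + l := by
    obtain ⟨i, hi, hrk, hp⟩ := (h2m b').2 ⟨le_refl _, by omega⟩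
    exact (h2 b').1 ⟨i, hi, hrk, hx2z.trans hp⟩
  have hb'l : b' + l' ≤ b + l := by
    obtain ⟨i, hi, hrk, hp⟩ := (h2m (b' + l' - 1)).2 ⟨by omega, by omega⟩
    have := (h2 _).1 ⟨i, hi, hrk, hx2z.trans hp⟩
    omega
  set T : Finset ℕ := (Finset.Ico b (b + l)).filter (fun t => Lsym π s t x₁) with hTdef
  have hTmem : ∀ t, t ∈ T ↔ (b ≤ t ∧ t < b + l ∧ Lsym π s t x₁) := by
    intro t
    rw [hTdef, Finset.mem_filter, Finset.mem_Ico, and_assoc]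
  have hTlt : ∀ t ∈ T, t < s.length := by
    intro t ht
    exact hLs_lt t x₁ ((hTmem t).1 ht).2.2
  set P : ℕ → ℕ := fun i => (i + (s.length - 1)) % s.length with hPdef
  have hPlt : ∀ i, P i < s.length := fun i => Nat.mod_lt _ (by omega)
  set LF : ℕ → ℕ := fun t => rank π s (P (idx t)) with hLFdef
  -- decomposition for t ∈ T
  have hdec : ∀ t ∈ T, ∃ w : List A,
      s.rotate (P (idx t)) = x₁ :: w ∧ s.rotate (idx t) = w ++ [x₁] ∧
      [x₂] <+: w ∧ w.length = s.length - 1 := by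
    intro t ht
    obtain ⟨hbt, htl, hls⟩ := (hTmem t).1 ht
    have htn := hTlt t ht
    obtain ⟨a, w, hd1, hd2⟩ := rot_decomp hs (hidxlt t htn)
    have hd1' : s.rotate (P (idx t)) = a :: w := hd1
    have hlast : (s.rotate (idx t)).getLast? = some x₁ := (hLs t htn x₁).1 hls
    have ha : a = x₁ := by
      rw [hd2] at hlast
      simpa [List.getLast?_append] using hlast
    subst ha
    have hwlen : w.length = s.length - 1 := by
      have hlen2 := congrArg List.length hd2
      simp [List.length_rotate] at hlen2
      omega
    have hpref2 : [x₂] <+: s.rotate (idx t) := (hRow t htn _).1 ((h2 t).2 ⟨hbt, htl⟩)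
    have hx2w : [x₂] <+: w := by
      rw [hd2] at hpref2
      exact (prefix_concat_iff (by simp [hwlen]; omega)).1 hpref2
    exact ⟨w, hd1', hd2, hx2w, hwlen⟩
  -- LF maps into [bb, bb+lb)
  have hF2 : ∀ t ∈ T, bb ≤ LF t ∧ LF t < bb + lb := by
    intro t ht
    obtain ⟨w, hw1, hw2, hw3, hw4⟩ := hdec t ht
    refine (h12 (LF t)).1 ⟨P (idx t), hPlt _, rfl, ?_⟩
    rw [hw1]
    obtain ⟨w0, rfl⟩ := hw3
    exact ⟨w0, rfl⟩
  -- LF strictly monotone on T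
  have hF1 : ∀ t ∈ T, ∀ t' ∈ T, t < t' → LF t < LF t' := by
    intro t ht t' ht' hlt
    obtain ⟨w, hw1, hw2, hw3, hw4⟩ := hdec t ht
    obtain ⟨w', hw1', hw2', hw3', hw4'⟩ := hdec t' ht'
    have htn := hTlt t ht
    have htn' := hTlt t' ht'
    have hidxne : idx t ≠ idx t' := by
      intro he
      rw [← hidxrk t htn, ← hidxrk t' htn', he] at hlt
      omega
    have hwne : w ≠ w' := by
      intro he
      apply hidxne
      apply hprim _ _ (hidxlt t htn) (hidxlt t' htn')
      rw [hw2, hw2', he]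
    have hwlen : w.length = w'.length := by rw [hw4, hw4']
    have hprec : Prec π (s.rotate (idx t)) (s.rotate (idx t')) := by
      rw [prec_iff_rank_lt hπ hprim (hidxlt t htn) (hidxlt t' htn'),
        hidxrk t htn, hidxrk t' htn']
      exact hlt
    rw [hw2, hw2'] at hprec
    have hww' : Prec π w w' := (prec_concat_iff hwne hwlen x₁).1 hprec
    obtain ⟨w0, rfl⟩ := hw3
    obtain ⟨w0', rfl⟩ := hw3'
    have hcons : Prec π (s.rotate (P (idx t))) (s.rotate (P (idx t'))) := by
      rw [hw1, hw1']
      exact (prec_cons_iff hloc lcp_ne_nil x₁).2 hww'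
    exact (prec_iff_rank_lt hπ hprim (hPlt _) (hPlt _)).1 hcons
  have hF1' : ∀ t ∈ T, ∀ t' ∈ T, LF t < LF t' → t < t' := by
    intro t ht t' ht' hlt
    rcases lt_trichotomy t t' with h' | h' | h'
    · exact h'
    · subst h'; omega
    · have := hF1 t' ht' t ht h'; omega
  have hFinj : ∀ t ∈ T, ∀ t' ∈ T, LF t = LF t' → t = t' := by
    intro t ht t' ht' he
    rcases lt_trichotomy t t' with h' | h' | h'
    · have := hF1 t ht t' ht' h'; omega
    · exact h'
    · have := hF1 t' ht' t ht h'; omega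
  -- LF surjective onto [bb, bb+lb)
  have hF3 : ∀ u, bb ≤ u → u < bb + lb → ∃ t ∈ T, LF t = u := by
    intro u hu1 hu2
    obtain ⟨j, hj, hrkj, hpref⟩ := (h12 u).2 ⟨hu1, hu2⟩
    set i := (j + 1) % s.length with hi'
    have hilt : i < s.length := Nat.mod_lt _ (by omega)
    have hPi : (i + (s.length - 1)) % s.length = j := by
      rw [hi', Nat.mod_add_mod]
      have he : j + 1 + (s.length - 1) = j + s.length := by omega
      rw [he, Nat.add_mod_right]
      exact Nat.mod_eq_of_lt hj
    obtain ⟨a, w, hd1, hd2⟩ := rot_decomp hs hilt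
    rw [hPi] at hd1
    rw [hd1] at hpref
    obtain ⟨rest, hrest⟩ := hpref
    obtain ⟨ha, hw⟩ : x₁ = a ∧ x₂ :: rest = w := by
      have : x₁ :: x₂ :: rest = a :: w := hrest
      simpa using this
    subst ha
    subst hw
    have hlsym : Lsym π s (rank π s i) x₁ :=
      ⟨i, hilt, rfl, by rw [hd2]; exact getLast?_concat' (x₂ :: rest) x₁⟩
    have hpref2 : RowPref π s [x₂] (rank π s i) :=
      ⟨i, hilt, rfl, by rw [hd2]; exact ⟨rest ++ [x₁], by simp⟩⟩
    have hT2 := (h2 _).1 hpref2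
    have hmem : rank π s i ∈ T := (hTmem _).2 ⟨hT2.1, hT2.2, hlsym⟩
    refine ⟨rank π s i, hmem, ?_⟩
    have htn : rank π s i < s.length := rank_lt hπ hprim hilt
    have hidxi : i = idx (rank π s i) := hidx_eq _ htn i hilt rfl
    show rank π s (P (idx (rank π s i))) = u
    rw [← hidxi]
    show rank π s ((i + (s.length - 1)) % s.length) = u
    rw [hPi, hrkj]
  -- F4
  have hF4 : ∀ t ∈ T, (RowPref π s (x₁ :: x₂ :: z) (LF t) ↔ (b' ≤ t ∧ t < b' + l')) := by
    intro t ht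
    obtain ⟨w, hw1, hw2, hw3, hw4⟩ := hdec t ht
    have htn := hTlt t ht
    have hLFlt : LF t < s.length := rank_lt hπ hprim (hPlt _)
    have hidP : P (idx t) = idx (LF t) := hidx_eq _ hLFlt _ (hPlt _) rfl
    rw [hRow _ hLFlt, ← hidP, hw1]
    constructor
    · intro hp
      rw [List.cons_prefix_cons] at hp
      have hzw : (x₂ :: z) <+: s.rotate (idx t) := by
        rw [hw2]
        exact hp.2.trans (w.prefix_append [x₁])
      exact (h2m t).1 ((hRow t htn _).2 hzw)
    · intro hb'
      have hp : (x₂ :: z) <+: s.rotate (idx t) := (hRow t htn _).1 ((h2m t).2 hb')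
      rw [hw2] at hp
      have hzw : (x₂ :: z) <+: w := (prefix_concat_iff (by simp [hw4]; omega)).1 hp
      exact (List.cons_prefix_cons).2 ⟨rfl, hzw⟩
  -- F6
  have hF6 : ∀ t ∈ T, LF t = bb + (T.filter (fun t' => t' < t)).card := by
    intro t ht
    have hcard : (T.filter (fun t' => t' < t)).card =
        ((Finset.Ico bb (bb + lb)).filter (fun u => u < LF t)).card := by
      apply Finset.card_bij (fun t' _ => LF t')
      · intro t' ht'
        rw [Finset.mem_filter] at ht'
        rw [Finset.mem_filter, Finset.mem_Ico]
        exact ⟨⟨(hF2 t' ht'.1).1, (hF2 t' ht'.1).2⟩, hF1 t' ht'.1 t ht ht'.2⟩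
      · intro t1 ht1 t2 ht2 he
        rw [Finset.mem_filter] at ht1 ht2
        exact hFinj t1 ht1.1 t2 ht2.1 he
      · intro u hu
        rw [Finset.mem_filter, Finset.mem_Ico] at hu
        obtain ⟨⟨hu1, hu2⟩, hu3⟩ := hu
        obtain ⟨t', ht'T, hLFt'⟩ := hF3 u hu1 hu2
        refine ⟨t', Finset.mem_filter.2 ⟨ht'T, hF1' t' ht'T t ht (by omega)⟩, hLFt'⟩
    have hfl : (Finset.Ico bb (bb + lb)).filter (fun u => u < LF t) =
        Finset.Ico bb (LF t) := by
      ext u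
      simp only [Finset.mem_filter, Finset.mem_Ico]
      have := hF2 t ht
      omega
    rw [hcard, hfl, Nat.card_Ico]
    have := hF2 t ht
    omega
  -- card T = lb
  have hcardT : T.card = lb := by
    have hcard : T.card = (Finset.Ico bb (bb + lb)).card := by
      apply Finset.card_bij (fun t _ => LF t)
      · intro t' ht'
        rw [Finset.mem_Ico]
        exact hF2 t' ht'
      · intro t1 ht1 t2 ht2 he
        exact hFinj t1 ht1 t2 ht2 he
      · intro u hu
        rw [Finset.mem_Ico] at hu
        obtain ⟨t', ht'T, hLFt'⟩ := hF3 u hu.1 hu.2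
        exact ⟨t', ht'T, hLFt'⟩
    rw [hcard, Nat.card_Ico]
    omega
  -- r and h as filters of T
  have hfr : (T.filter (fun t' => t' < b')).card = r := by
    rw [hr]
    congr 1
    ext t
    rw [hTdef]
    simp only [Finset.mem_filter, Finset.mem_Ico]
    constructor
    · rintro ⟨⟨⟨hb1, hb2⟩, hls⟩, hlt⟩
      exact ⟨⟨hb1, hlt⟩, hls⟩
    · rintro ⟨⟨hb1, hlt⟩, hls⟩
      exact ⟨⟨⟨hb1, by omega⟩, hls⟩, hlt⟩
  have hfh : (T.filter (fun t' => b' ≤ t' ∧ t' < b' + l')).card = h := by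
    rw [hh]
    congr 1
    ext t
    rw [hTdef]
    simp only [Finset.mem_filter, Finset.mem_Ico]
    constructor
    · rintro ⟨⟨⟨hb1, hb2⟩, hls⟩, hlt1, hlt2⟩
      exact ⟨⟨hlt1, hlt2⟩, hls⟩
    · rintro ⟨⟨hlt1, hlt2⟩, hls⟩
      exact ⟨⟨⟨by omega, by omega⟩, hls⟩, hlt1, hlt2⟩
  have hU : (T.filter (fun t' => t' < b' + l')).card = r + h := by
    have hsplit : T.filter (fun t' => t' < b' + l') =
        T.filter (fun t' => t' < b' ∨ (b' ≤ t' ∧ t' < b' + l')) := by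
      apply Finset.filter_congr
      intro t _
      constructor
      · intro hlt
        by_cases hb1 : t < b'
        · exact Or.inl hb1
        · exact Or.inr ⟨by omega, hlt⟩
      · rintro (hlt | ⟨h1, h2'⟩) <;> omega
    rw [hsplit, Finset.filter_or, Finset.card_union_of_disjoint, hfr, hfh]
    rw [Finset.disjoint_left]
    intro t ht1 ht2
    rw [Finset.mem_filter] at ht1 ht2
    omega
  -- F8 / F9
  have hF8 : ∀ t ∈ T, (b' ≤ t ↔ r ≤ (T.filter (fun t' => t' < t)).card) := by
    intro t ht
    constructor
    · intro hb't
      rw [← hfr]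
      apply Finset.card_le_card
      intro t' ht'
      rw [Finset.mem_filter] at ht' ⊢
      exact ⟨ht'.1, by omega⟩
    · intro hc
      by_contra hlt
      push_neg at hlt
      have hins : insert t (T.filter (fun t' => t' < t)) ⊆
          T.filter (fun t' => t' < b') := by
        intro t' ht'
        rcases Finset.mem_insert.1 ht' with rfl | ht'
        · exact Finset.mem_filter.2 ⟨ht, hlt⟩
        · rw [Finset.mem_filter] at ht' ⊢
          exact ⟨ht'.1, by omega⟩
      have hcard := Finset.card_le_card hins
      rw [Finset.card_insert_of_notMem (by simp [Finset.mem_filter]), hfr] at hcard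
      omega
  have hF9 : ∀ t ∈ T, (t < b' + l' ↔ (T.filter (fun t' => t' < t)).card < r + h) := by
    intro t ht
    constructor
    · intro hlt
      have hins : insert t (T.filter (fun t' => t' < t)) ⊆
          T.filter (fun t' => t' < b' + l') := by
        intro t' ht'
        rcases Finset.mem_insert.1 ht' with rfl | ht'
        · exact Finset.mem_filter.2 ⟨ht, hlt⟩
        · rw [Finset.mem_filter] at ht' ⊢
          exact ⟨ht'.1, by omega⟩
      have hcard := Finset.card_le_card hins
      rw [Finset.card_insert_of_notMem (by simp [Finset.mem_filter]), hU] at hcard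
      omega
    · intro hc
      by_contra hlt
      push_neg at hlt
      have hsub : T.filter (fun t' => t' < b' + l') ⊆ T.filter (fun t' => t' < t) := by
        intro t' ht'
        rw [Finset.mem_filter] at ht' ⊢
        exact ⟨ht'.1, by omega⟩
      have hcard := Finset.card_le_card hsub
      rw [hU] at hcard
      omega
  have hrh_lb : r + h ≤ lb := by
    rw [← hU, ← hcardT]
    exact Finset.card_le_card (Finset.filter_subset _ _)
  -- conclusion
  intro t0
  constructor
  · intro hrp
    have h12p : RowPref π s [x₁, x₂] t0 := by
      obtain ⟨i, hi, hrk, hp⟩ := hrp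
      have hpp : [x₁, x₂] <+: (x₁ :: x₂ :: z) := ⟨z, rfl⟩
      exact ⟨i, hi, hrk, hpp.trans hp⟩
    obtain ⟨ht1, ht2⟩ := (h12 t0).1 h12p
    obtain ⟨t, htT, hLFt⟩ := hF3 t0 ht1 ht2
    have hb't : b' ≤ t ∧ t < b' + l' := (hF4 t htT).1 (by rw [hLFt]; exact hrp)
    have hc1 := (hF8 t htT).1 hb't.1
    have hc2 := (hF9 t htT).1 hb't.2
    have hc3 := hF6 t htT
    omega
  · rintro ⟨ht1, ht2⟩
    obtain ⟨t, htT, hLFt⟩ := hF3 t0 (by omega) (by omega)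
    have hc3 := hF6 t htT
    have hb't : b' ≤ t := (hF8 t htT).2 (by omega)
    have hlt' : t < b' + l' := (hF9 t htT).2 (by omega)
    rw [← hLFt]
    exact (hF4 t htT).2 ⟨hb't, hlt'⟩
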